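/- The full prenexing transformation produces prenex formulas of the same quantifier depth: for every QBF φ and Q ∈ {∃,∀}, tr^Q(φ) is in prenex form (a sequence of quantifier blocks followed by a boolean formula) and md(tr^Q(φ)) = md(φ). -/

import Mathlib

/-- Syntax of full quantified boolean formulas. -/
inductive Fml : Type where
  | var : ℕ → Fml
  | tru : Fml
  | fls : Fml
  | neg : Fml → Fml
  | conj : Fml → Fml → Fml
  | disj : Fml → Fml → Fml
  | imp : Fml → Fml → Fml
  | biff : Fml → Fml → Fml
  | qex : Finset ℕ → Fml → Fml
  | qall : Finset ℕ → Fml → Fml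
  deriving DecidableEq

namespace Fml

/-- Satisfaction of a formula by a valuation. -/
def Sat : (ℕ → Bool) → Fml → Prop
  | V, var p => V p = true
  | _, tru => True
  | _, fls => False
  | V, neg φ => ¬ Sat V φ
  | V, conj φ ψ => Sat V φ ∧ Sat V ψ
  | V, disj φ ψ => Sat V φ ∨ Sat V ψ
  | V, imp φ ψ => Sat V φ → Sat V ψ
  | V, biff φ ψ => (Sat V φ ↔ Sat V ψ)
  | V, qex X φ => ∃ W : ℕ → Bool, (∀ q ∉ X, W q = V q) ∧ Sat W φ
  | V, qall X φ => ∀ W : ℕ → Bool, (∀ q ∉ X, W q = V q) → Sat W φ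

/-- Logical equivalence: same truth value under every valuation. -/
def Equiv (φ ψ : Fml) : Prop := ∀ V : ℕ → Bool, Sat V φ ↔ Sat V ψ

/-- All variables occurring (free or bound, including quantifier blocks). -/
def vars : Fml → Finset ℕ
  | var p => {p}
  | tru => ∅
  | fls => ∅
  | neg φ => vars φ
  | conj φ ψ => vars φ ∪ vars ψ
  | disj φ ψ => vars φ ∪ vars ψ
  | imp φ ψ => vars φ ∪ vars ψ
  | biff φ ψ => vars φ ∪ vars ψ
  | qex X φ => X ∪ vars φ
  | qall X φ => X ∪ vars φ

/-- Free variables. -/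
def freeVars : Fml → Finset ℕ
  | var p => {p}
  | tru => ∅
  | fls => ∅
  | neg φ => freeVars φ
  | conj φ ψ => freeVars φ ∪ freeVars ψ
  | disj φ ψ => freeVars φ ∪ freeVars ψ
  | imp φ ψ => freeVars φ ∪ freeVars ψ
  | biff φ ψ => freeVars φ ∪ freeVars ψ
  | qex X φ => freeVars φ \ X
  | qall X φ => freeVars φ \ X

/-- Bound variables. -/
def boundVars : Fml → Finset ℕ
  | var _ => ∅
  | tru => ∅
  | fls => ∅
  | neg φ => boundVars φ
  | conj φ ψ => boundVars φ ∪ boundVars ψ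
  | disj φ ψ => boundVars φ ∪ boundVars ψ
  | imp φ ψ => boundVars φ ∪ boundVars ψ
  | biff φ ψ => boundVars φ ∪ boundVars ψ
  | qex X φ => X ∪ boundVars φ
  | qall X φ => X ∪ boundVars φ

/-- Substitution of `ρ` for free occurrences of the variable `p`. -/
def subst (p : ℕ) (ρ : Fml) : Fml → Fml
  | var q => if q = p then ρ else var q
  | tru => tru
  | fls => fls
  | neg φ => neg (subst p ρ φ)
  | conj φ ψ => conj (subst p ρ φ) (subst p ρ ψ)
  | disj φ ψ => disj (subst p ρ φ) (subst p ρ ψ)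
  | imp φ ψ => imp (subst p ρ φ) (subst p ρ ψ)
  | biff φ ψ => biff (subst p ρ φ) (subst p ρ ψ)
  | qex X φ => qex X (if p ∈ X then φ else subst p ρ φ)
  | qall X φ => qall X (if p ∈ X then φ else subst p ρ φ)

/-- Simultaneous substitution given by an association list. -/
def simSubst (σ : List (ℕ × Fml)) : Fml → Fml
  | var q => ((σ.find? (fun e => e.1 == q)).map Prod.snd).getD (var q)
  | tru => tru
  | fls => fls
  | neg φ => neg (simSubst σ φ)
  | conj φ ψ => conj (simSubst σ φ) (simSubst σ ψ)
  | disj φ ψ => disj (simSubst σ φ) (simSubst σ ψ)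
  | imp φ ψ => imp (simSubst σ φ) (simSubst σ ψ)
  | biff φ ψ => biff (simSubst σ φ) (simSubst σ ψ)
  | qex X φ => qex X (simSubst (σ.filter (fun e => decide (e.1 ∉ X))) φ)
  | qall X φ => qall X (simSubst (σ.filter (fun e => decide (e.1 ∉ X))) φ)

/-- Conjunction of a list of formulas (`⊤` for the empty list). -/
def bigAnd : List Fml → Fml
  | [] => tru
  | [φ] => φ
  | φ :: rest => conj φ (bigAnd rest)

/-- Length of a formula: variables and operators count 1, except that
negation does not count; a block `QX` contributes `1 + |X|`. -/
def len : Fml → ℕ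
  | var _ => 1
  | tru => 1
  | fls => 1
  | neg φ => len φ
  | conj φ ψ => 1 + len φ + len ψ
  | disj φ ψ => 1 + len φ + len ψ
  | imp φ ψ => 1 + len φ + len ψ
  | biff φ ψ => 1 + len φ + len ψ
  | qex X φ => 1 + X.card + len φ
  | qall X φ => 1 + X.card + len φ

/-- Quantifier depth. -/
def md : Fml → ℕ
  | var _ => 0
  | tru => 0
  | fls => 0
  | neg φ => md φ
  | conj φ ψ => max (md φ) (md ψ)
  | disj φ ψ => max (md φ) (md ψ)
  | imp φ ψ => max (md φ) (md ψ)
  | biff φ ψ => max (md φ) (md ψ)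
  | qex _ φ => 1 + md φ
  | qall _ φ => 1 + md φ

/-- Number of quantifier blocks. -/
def nb : Fml → ℕ
  | var _ => 0
  | tru => 0
  | fls => 0
  | neg φ => nb φ
  | conj φ ψ => nb φ + nb ψ
  | disj φ ψ => nb φ + nb ψ
  | imp φ ψ => nb φ + nb ψ
  | biff φ ψ => nb φ + nb ψ
  | qex _ φ => 1 + nb φ
  | qall _ φ => 1 + nb φ

/-- Total number of quantified variables (sum of block sizes). -/
def nv : Fml → ℕ
  | var _ => 0
  | tru => 0
  | fls => 0
  | neg φ => nv φ
  | conj φ ψ => nv φ + nv ψ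
  | disj φ ψ => nv φ + nv ψ
  | imp φ ψ => nv φ + nv ψ
  | biff φ ψ => nv φ + nv ψ
  | qex X φ => X.card + nv φ
  | qall X φ => X.card + nv φ

/-- Boolean (quantifier-free) formulas. -/
def isBool : Fml → Bool
  | var _ => true
  | tru => true
  | fls => true
  | neg φ => isBool φ
  | conj φ ψ => isBool φ && isBool ψ
  | disj φ ψ => isBool φ && isBool ψ
  | imp φ ψ => isBool φ && isBool ψ
  | biff φ ψ => isBool φ && isBool ψ
  | qex _ _ => false
  | qall _ _ => false

/-- Prenex form: a prefix of quantifier blocks followed by a boolean formula. -/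
def IsPrenex : Fml → Prop
  | qex _ φ => IsPrenex φ
  | qall _ φ => IsPrenex φ
  | φ => isBool φ = true

end Fml

/-- Quantifiers. -/
inductive Quant : Type where
  | qex : Quant
  | qall : Quant
  deriving DecidableEq

/-- The dual of a quantifier. -/
def Quant.dual : Quant → Quant
  | .qex => .qall
  | .qall => .qex

/-- Applying a quantifier block to a formula. -/
def qApply : Quant → Finset ℕ → Fml → Fml
  | .qex, X, φ => Fml.qex X φ
  | .qall, X, φ => Fml.qall X φ
open Fml in
/-- An entry `(p, Q, X, ψ)` abbreviates the quantified formula `QX ψ`. -/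
def entryFml (e : ℕ × Quant × Finset ℕ × Fml) : Fml := qApply e.2.1 e.2.2.1 e.2.2.2

open Fml in
/-- A decomposition of `φ` into a boolean skeleton `β` and its outermost
quantified subformulas `QᵢXᵢφᵢ` abbreviated by fresh variables `pᵢ`,
together with a choice of fresh positive and negative copies `x⁺ᵢ`, `x⁻ᵢ`
of the quantified variables (Fact 4 of the paper). -/
structure OneLevelData (φ : Fml) where
  β : Fml
  L : List (ℕ × Quant × Finset ℕ × Fml)
  posC : ℕ → ℕ → ℕ
  negC : ℕ → ℕ → ℕ
  hbool : β.isBool = true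
  hdec : φ = simSubst (L.map (fun e => (e.1, entryFml e))) β
  hnodup : (L.map (fun e => e.1)).Nodup
  hpnotin : ∀ e ∈ L, e.1 ∉ vars φ
  hpnotfree : ∀ e ∈ L, ∀ e' ∈ L, e.1 ∉ freeVars e'.2.2.2
  hlen : len φ = len β + (L.map (fun e => e.2.2.1.card)).sum
      + (L.map (fun e => len e.2.2.2)).sum
  hmd : md φ = (L.map (fun e => 1 + md e.2.2.2)).foldr max 0
  hcfresh : ∀ i : ℕ, ∀ e ∈ L[i]?, ∀ x ∈ e.2.2.1,
      posC i x ∉ vars φ ∧ negC i x ∉ vars φ ∧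
      posC i x ∉ L.map (fun e => e.1) ∧ negC i x ∉ L.map (fun e => e.1)
  hcdist : ∀ i i' : ℕ, ∀ e ∈ L[i]?, ∀ e' ∈ L[i']?,
      ∀ x ∈ e.2.2.1, ∀ x' ∈ e'.2.2.1, ∀ b b' : Bool,
      (if b then posC i x else negC i x) = (if b' then posC i' x' else negC i' x') →
      (i, x, b) = (i', x', b')

namespace OneLevelData

open Fml

variable {φ : Fml}

/-- `φᵢ[σᵢ]`: the body of the `i`-th entry with its quantified variables
renamed to their positive copies. -/
noncomputable def renameEntry (D : OneLevelData φ) (i : ℕ) (e : ℕ × Quant × Finset ℕ × Fml) : Fml :=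
  simSubst (e.2.2.1.toList.map (fun x => (x, var (D.posC i x)))) e.2.2.2

/-- The linking constraint of the `i`-th entry:
`¬pᵢ → ⋀_{x∈Xᵢ}(x⁺ᵢ ↔ x⁻ᵢ)` if `Qᵢ = ∃` and
`pᵢ → ⋀_{x∈Xᵢ}(x⁺ᵢ ↔ x⁻ᵢ)` if `Qᵢ = ∀`. -/
noncomputable def linkEntry (D : OneLevelData φ) (i : ℕ) (e : ℕ × Quant × Finset ℕ × Fml) : Fml :=
  match e.2.1 with
  | .qex => imp (neg (var e.1))
      (bigAnd (e.2.2.1.toList.map (fun x => biff (var (D.posC i x)) (var (D.negC i x)))))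
  | .qall => imp (var e.1)
      (bigAnd (e.2.2.1.toList.map (fun x => biff (var (D.posC i x)) (var (D.negC i x)))))

/-- The defining and linking constraints
`⋀ᵢ (pᵢ ↔ φᵢ[σᵢ]) ∧ (linking constraints)`. -/
noncomputable def constraints (D : OneLevelData φ) : Fml :=
  conj (bigAnd ((D.L.zipIdx.map Prod.swap).map (fun ie => biff (var ie.2.1) (D.renameEntry ie.1 ie.2))))
       (bigAnd ((D.L.zipIdx.map Prod.swap).map (fun ie => D.linkEntry ie.1 ie.2)))

/-- The one-level transformation `T^∀(φ)`. -/
noncomputable def Tall (D : OneLevelData φ) : Fml := conj D.constraints D.β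

/-- The one-level transformation `T^∃(φ)`. -/
noncomputable def Tex (D : OneLevelData φ) : Fml := imp D.constraints D.β

/-- `T^Q(φ)`. -/
noncomputable def TQ (Q : Quant) (D : OneLevelData φ) : Fml :=
  match Q with
  | .qall => D.Tall
  | .qex => D.Tex

/-- `N(φ)`: the set of fresh negative copies. -/
def Nset (D : OneLevelData φ) : Finset ℕ :=
  ((D.L.zipIdx.map Prod.swap).map (fun ie => ie.2.2.2.1.image (D.negC ie.1))).foldr (· ∪ ·) ∅

/-- `P(φ)`: the set of fresh positive copies together with the abbreviation
variables `pᵢ`. -/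
def Pset (D : OneLevelData φ) : Finset ℕ :=
  ((D.L.zipIdx.map Prod.swap).map (fun ie => ie.2.2.2.1.image (D.posC ie.1) ∪ {ie.2.1})).foldr (· ∪ ·) ∅

end OneLevelData

open Fml OneLevelData in
/-- The full prenexing transformation `tr^Q`, with explicit fuel (the fuel
`md φ` always suffices since `md (T^Q(φ)) = md φ − 1` for non-boolean `φ`);
`D` is a choice of one-level decomposition for every formula. -/
noncomputable def tr (D : ∀ ψ : Fml, OneLevelData ψ) : ℕ → Quant → Fml → Fml
  | 0, _, φ => φ
  | n + 1, Q, φ =>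
    if φ.isBool then φ
    else
      let ψ := TQ Q (D φ)
      qApply Q.dual (Pset (D φ) ∪ Nset (D ψ)) (tr D n Q.dual ψ)

open Fml OneLevelData in
/-- The full prenexing transformation `tr^Q(φ)`. -/
noncomputable def trQ (D : ∀ ψ : Fml, OneLevelData ψ) (Q : Quant) (φ : Fml) : Fml :=
  tr D (md φ) Q φ

section Aux
open Fml OneLevelData

lemma md_of_isBool : ∀ φ : Fml, φ.isBool = true → φ.md = 0 := by
  intro φ h
  induction φ <;> simp_all [Fml.isBool, Fml.md]

lemma isBool_of_md_zero : ∀ φ : Fml, φ.md = 0 → φ.isBool = true := by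
  intro φ h
  induction φ <;> simp_all [Fml.isBool, Fml.md, Nat.max_eq_zero_iff]

lemma isPrenex_of_isBool : ∀ φ : Fml, φ.isBool = true → IsPrenex φ := by
  intro φ h
  cases φ <;> simp_all [Fml.IsPrenex, Fml.isBool]

lemma md_simSubst : ∀ (φ : Fml) (σ : List (ℕ × Fml)),
    (∀ e ∈ σ, Fml.md e.2 = 0) → (simSubst σ φ).md = φ.md := by
  intro φ
  induction φ with
  | var q =>
    intro σ h
    cases hf : σ.find? (fun e => e.1 == q) with
    | none => simp [Fml.simSubst, hf, Fml.md]
    | some e =>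
      simp [Fml.simSubst, hf, Fml.md]
      exact h e (List.mem_of_find?_eq_some hf)
  | tru => intro σ h; simp [Fml.simSubst, Fml.md]
  | fls => intro σ h; simp [Fml.simSubst, Fml.md]
  | neg φ ih => intro σ h; simp [Fml.simSubst, Fml.md, ih σ h]
  | conj φ ψ ih1 ih2 => intro σ h; simp [Fml.simSubst, Fml.md, ih1 σ h, ih2 σ h]
  | disj φ ψ ih1 ih2 => intro σ h; simp [Fml.simSubst, Fml.md, ih1 σ h, ih2 σ h]
  | imp φ ψ ih1 ih2 => intro σ h; simp [Fml.simSubst, Fml.md, ih1 σ h, ih2 σ h]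
  | biff φ ψ ih1 ih2 => intro σ h; simp [Fml.simSubst, Fml.md, ih1 σ h, ih2 σ h]
  | qex X φ ih =>
    intro σ h
    simp [Fml.simSubst, Fml.md]
    exact ih _ (fun e he => h e (List.mem_of_mem_filter he))
  | qall X φ ih =>
    intro σ h
    simp [Fml.simSubst, Fml.md]
    exact ih _ (fun e he => h e (List.mem_of_mem_filter he))

lemma md_bigAnd : ∀ l : List Fml, (bigAnd l).md = (l.map Fml.md).foldr max 0
  | [] => by simp [Fml.bigAnd, Fml.md]
  | [a] => by simp [Fml.bigAnd, Fml.md]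
  | a :: b :: t => by
    have : bigAnd (a :: b :: t) = Fml.conj a (bigAnd (b :: t)) := rfl
    rw [this]
    simp [Fml.md, md_bigAnd (b :: t)]

lemma md_bigAnd_zero (l : List Fml) (h : ∀ f ∈ l, f.md = 0) : (bigAnd l).md = 0 := by
  rw [md_bigAnd]
  induction l with
  | nil => simp
  | cons a t ih =>
    simp only [List.map_cons, List.foldr_cons]
    rw [h a (by simp), ih (fun f hf => h f (by simp [hf]))]
    simp

lemma md_linkEntry {φ : Fml} (D : OneLevelData φ) (i : ℕ) (e : ℕ × Quant × Finset ℕ × Fml) :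
    (D.linkEntry i e).md = 0 := by
  have hz : ∀ (s : Finset ℕ) (f g : ℕ → ℕ),
      (bigAnd (s.toList.map (fun x => Fml.biff (Fml.var (f x)) (Fml.var (g x))))).md = 0 := by
    intro s f g
    apply md_bigAnd_zero
    intro ψ hψ
    obtain ⟨x, _, rfl⟩ := List.mem_map.mp hψ
    simp [Fml.md]
  unfold OneLevelData.linkEntry
  cases e.2.1 <;> simp [Fml.md, hz]

lemma md_renameEntry {φ : Fml} (D : OneLevelData φ) (i : ℕ) (e : ℕ × Quant × Finset ℕ × Fml) :
    (D.renameEntry i e).md = e.2.2.2.md := by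
  unfold OneLevelData.renameEntry
  apply md_simSubst
  intro p hp
  obtain ⟨x, _, rfl⟩ := List.mem_map.mp hp
  simp [Fml.md]

lemma enum_map_snd_comp {α β : Type*} (L : List α) (g : α → β) :
    (L.zipIdx.map Prod.swap).map (fun ie => g ie.2) = L.map g := by
  simp [List.map_map, Function.comp_def]
  rw [show (fun x : α × ℕ => g x.1) = g ∘ Prod.fst from rfl, ← List.map_map,
    List.zipIdx_map_fst]

lemma md_constraints {φ : Fml} (D : OneLevelData φ) :
    D.constraints.md = (D.L.map (fun e => e.2.2.2.md)).foldr max 0 := by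
  unfold OneLevelData.constraints
  have h2 : (bigAnd ((D.L.zipIdx.map Prod.swap).map (fun ie => D.linkEntry ie.1 ie.2))).md = 0 := by
    apply md_bigAnd_zero
    intro f hf
    obtain ⟨ie, _, rfl⟩ := List.mem_map.mp hf
    exact md_linkEntry D ie.1 ie.2
  have h1 : (((D.L.zipIdx.map Prod.swap).map (fun ie => Fml.biff (Fml.var ie.2.1) (D.renameEntry ie.1 ie.2))).map
      Fml.md) = (D.L.zipIdx.map Prod.swap).map (fun ie => ie.2.2.2.2.md) := by
    rw [List.map_map]
    apply List.map_congr_left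
    intro ie _
    simp [Function.comp, Fml.md, md_renameEntry]
  rw [show ∀ a b : Fml, (Fml.conj a b).md = max a.md b.md from fun _ _ => rfl,
    h2, md_bigAnd, h1,
    show List.map (fun ie : ℕ × (ℕ × Quant × Finset ℕ × Fml) => ie.2.2.2.2.md) (D.L.zipIdx.map Prod.swap)
      = List.map (fun e => e.2.2.2.md) D.L from enum_map_snd_comp D.L (fun e => e.2.2.2.md)]
  simp

lemma foldr_max_one_add {α : Type*} (g : α → ℕ) :
    ∀ l : List α, l ≠ [] →
      (l.map (fun a => 1 + g a)).foldr max 0 = 1 + (l.map g).foldr max 0 := by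
  intro l
  induction l with
  | nil => simp
  | cons a t ih =>
    intro _
    cases t with
    | nil => simp
    | cons b s =>
      simp only [List.map_cons, List.foldr_cons] at *
      rw [ih (by simp)]
      simp [Nat.max_def]
      split <;> split <;> omega

lemma md_TQ {φ : Fml} (Q : Quant) (D : OneLevelData φ) :
    (TQ Q D).md = D.constraints.md := by
  have hβ : D.β.md = 0 := md_of_isBool _ D.hbool
  cases Q <;> simp [OneLevelData.TQ, OneLevelData.Tex, OneLevelData.Tall, Fml.md, hβ]

lemma md_TQ_eq {φ : Fml} (Q : Quant) (D : OneLevelData φ) (hb : ¬ φ.isBool = true) :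
    φ.md = 1 + (TQ Q D).md := by
  have hL : D.L ≠ [] := by
    intro h
    have := D.hmd
    rw [h] at this
    simp at this
    exact hb (isBool_of_md_zero φ this)
  rw [md_TQ, md_constraints, ← foldr_max_one_add _ _ hL, ← D.hmd]

lemma md_qApply (q : Quant) (X : Finset ℕ) (φ : Fml) : (qApply q X φ).md = 1 + φ.md := by
  cases q <;> rfl

lemma isPrenex_qApply (q : Quant) (X : Finset ℕ) (φ : Fml) (h : IsPrenex φ) :
    IsPrenex (qApply q X φ) := by
  cases q <;> exact h

lemma tr_main (D : ∀ ψ : Fml, OneLevelData ψ) :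
    ∀ (n : ℕ) (Q : Quant) (φ : Fml), φ.md ≤ n →
      IsPrenex (tr D n Q φ) ∧ (tr D n Q φ).md = φ.md := by
  intro n
  induction n with
  | zero =>
    intro Q φ h
    have h0 : φ.md = 0 := Nat.le_zero.mp h
    exact ⟨isPrenex_of_isBool φ (isBool_of_md_zero φ h0), rfl⟩
  | succ n ih =>
    intro Q φ h
    by_cases hb : φ.isBool = true
    · rw [show tr D (n + 1) Q φ = φ by simp [tr, hb]]
      exact ⟨isPrenex_of_isBool φ hb, rfl⟩
    · have heq : tr D (n + 1) Q φ =
          qApply Q.dual (Pset (D φ) ∪ Nset (D (TQ Q (D φ)))) (tr D n Q.dual (TQ Q (D φ))) := by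
        simp [tr, hb]
      have hkey : φ.md = 1 + (TQ Q (D φ)).md := md_TQ_eq Q (D φ) hb
      have hψ : (TQ Q (D φ)).md ≤ n := by omega
      obtain ⟨hp, hm⟩ := ih Q.dual _ hψ
      rw [heq]
      refine ⟨isPrenex_qApply _ _ _ hp, ?_⟩
      rw [md_qApply, hm]
      omega

end Aux

open Fml OneLevelData in
/-- the full prenexing transformation produces prenex formulas
of the same quantifier depth: `tr^Q(φ)` is in prenex form and
`md (tr^Q(φ)) = md φ`. -/
theorem tr_prenex_depth (D : ∀ ψ : Fml, OneLevelData ψ) (Q : Quant) (φ : Fml) :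
    IsPrenex (trQ D Q φ) ∧ md (trQ D Q φ) = md φ := by
  exact tr_main D (md φ) Q φ le_rfl
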